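/- arXiv:q-alg/9609024 — 3 statements merged into one kernel-verified Lean document; each statement's English description precedes it below -/
import Mathlib

section
/- For every triple of complex numbers (x, y, z) ∈ ℂ³ there exists a group homomorphism ρ : F₂ → SL(2,ℂ) from the free group on two generators a and b such that tr(ρ(a)) = x, tr(ρ(b)) = y, and tr(ρ(ab)) = z. -/
/-!
Take `ρ(a) = [[x, -1], [1, 0]]` and `ρ(b) = [[0, c], [-c⁻¹, y]]`. Their product is upper triangular
with diagonal `(c⁻¹, c)`, so `tr ρ(ab) = c + c⁻¹`, and over `ℂ` the equation `c + c⁻¹ = z` has a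
solution `c ≠ 0`: a root of `c² - z c + 1`.
-/

open Matrix Polynomial

namespace Matrix.SpecialLinearGroup

variable {R : Type*} [CommRing R]

def companion (x : R) : SpecialLinearGroup (Fin 2) R :=
  ⟨!![x, -1; 1, 0], by simp [det_fin_two_of]⟩

def twistedCompanion (c : Rˣ) (y : R) : SpecialLinearGroup (Fin 2) R :=
  ⟨!![0, c; -↑c⁻¹, y], by simp [det_fin_two_of]⟩

theorem trace_companion (x : R) : trace (companion x : Matrix (Fin 2) (Fin 2) R) = x := by
  simp [companion, trace_fin_two_of]

theorem trace_twistedCompanion (c : Rˣ) (y : R) :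
    trace (twistedCompanion c y : Matrix (Fin 2) (Fin 2) R) = y := by
  simp [twistedCompanion, trace_fin_two_of]

theorem trace_companion_mul_twistedCompanion (x y : R) (c : Rˣ) :
    trace ((companion x * twistedCompanion c y : SpecialLinearGroup (Fin 2) R) :
      Matrix (Fin 2) (Fin 2) R) = ↑c⁻¹ + c := by
  rw [coe_mul]
  simp [companion, twistedCompanion, trace_fin_two_of]

end Matrix.SpecialLinearGroup

theorem IsAlgClosed.exists_unit_add_inv_eq {K : Type*} [Field K] [IsAlgClosed K] (z : K) :
    ∃ c : Kˣ, (↑c⁻¹ + c : K) = z := by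
  have hdeg : (X ^ 2 - C z * X + 1 : K[X]).degree = 2 := by compute_degree!
  obtain ⟨c, hc⟩ := IsAlgClosed.exists_root (X ^ 2 - C z * X + 1 : K[X]) (by simp [hdeg])
  have hc : c ^ 2 - z * c + 1 = 0 := by simpa using hc
  have hc0 : c ≠ 0 := by rintro rfl; simp at hc
  refine ⟨Units.mk0 c hc0, ?_⟩
  rw [Units.val_inv_eq_inv_val, Units.val_mk0]
  field_simp
  linear_combination hc

open Matrix.SpecialLinearGroup in
theorem trace_coordinates_surjective (x y z : ℂ) :
    ∃ ρ : FreeGroup (Fin 2) →* Matrix.SpecialLinearGroup (Fin 2) ℂ,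
      Matrix.trace ((ρ (FreeGroup.of 0) : Matrix (Fin 2) (Fin 2) ℂ)) = x ∧
      Matrix.trace ((ρ (FreeGroup.of 1) : Matrix (Fin 2) (Fin 2) ℂ)) = y ∧
      Matrix.trace ((ρ (FreeGroup.of 0 * FreeGroup.of 1) : Matrix (Fin 2) (Fin 2) ℂ)) = z := by
  obtain ⟨c, hc⟩ := IsAlgClosed.exists_unit_add_inv_eq z
  refine ⟨FreeGroup.lift ![companion x, twistedCompanion c y], ?_, ?_, ?_⟩
  · simpa using trace_companion x
  · simpa using trace_twistedCompanion c y
  · simpa [← hc] using trace_companion_mul_twistedCompanion x y c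
end

section
/- The three trace functions τ_a, τ_b, τ_ab on the set Hom(F₂, SL(2,ℂ)) of group homomorphisms, defined by τ_a(ρ) = tr(ρ(a)), τ_b(ρ) = tr(ρ(b)), τ_ab(ρ) = tr(ρ(ab)), are algebraically independent over ℂ: if P is a polynomial in three variables with complex coefficients such that P(tr(ρ(a)), tr(ρ(b)), tr(ρ(ab))) = 0 for every homomorphism ρ : F₂ → SL(2,ℂ), then P is the zero polynomial. -/
open Matrix

/-!
Every triple `(x, y, z)` is the trace triple of some pair in `SL(2, ℂ)`: writing `x = α + α⁻¹` and
`y = β + β⁻¹`, the pair `A = [[α, 1], [0, α⁻¹]]`, `B = [[β, 0], [t, β⁻¹]]` has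
`tr (A * B) = α β + α⁻¹ β⁻¹ + t`, and `t` is free. So a polynomial vanishing on all trace triples
vanishes on all of `ℂ³`, hence is zero since `ℂ` is infinite.
-/

section TraceTriple

variable {K : Type*} [Field K]

theorem IsAlgClosed.exists_mul_eq_one_add_eq [IsAlgClosed K] (x : K) :
    ∃ α α' : K, α * α' = 1 ∧ α + α' = x := by
  open Polynomial in
  obtain ⟨α, hα⟩ := IsAlgClosed.exists_root (C 1 * X ^ 2 + C (-x) * X + C 1)
    (by rw [degree_quadratic one_ne_zero]; decide)
  refine ⟨α, x - α, ?_, by ring⟩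
  simp only [IsRoot, eval_add, eval_mul, eval_C, eval_pow, eval_X] at hα
  linear_combination -hα

def upperSL2 {R : Type*} [CommRing R] (α α' : R) (h : α * α' = 1) :
    SpecialLinearGroup (Fin 2) R :=
  ⟨!![α, 1; 0, α'], by simp [det_fin_two_of, h]⟩

def lowerSL2 {R : Type*} [CommRing R] (β β' t : R) (h : β * β' = 1) :
    SpecialLinearGroup (Fin 2) R :=
  ⟨!![β, 0; t, β'], by simp [det_fin_two_of, h]⟩

theorem Matrix.SpecialLinearGroup.exists_trace_eq_trace_eq_trace_mul_eq [IsAlgClosed K]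
    (x y z : K) :
    ∃ A B : SpecialLinearGroup (Fin 2) K,
      trace (A : Matrix (Fin 2) (Fin 2) K) = x ∧ trace (B : Matrix (Fin 2) (Fin 2) K) = y ∧
        trace ((A : Matrix (Fin 2) (Fin 2) K) * (B : Matrix (Fin 2) (Fin 2) K)) = z := by
  obtain ⟨α, α', hα, rfl⟩ := IsAlgClosed.exists_mul_eq_one_add_eq x
  obtain ⟨β, β', hβ, rfl⟩ := IsAlgClosed.exists_mul_eq_one_add_eq y
  refine ⟨upperSL2 α α' hα, lowerSL2 β β' (z - α * β - α' * β') hβ, ?_, ?_, ?_⟩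
  · simp [upperSL2, trace_fin_two_of]
  · simp [lowerSL2, trace_fin_two_of]
  · simp only [upperSL2, lowerSL2, mul_fin_two, trace_fin_two_of]
    ring

end TraceTriple

def traceCoordinates {K : Type*} [Field K]
    (ρ : FreeGroup (Fin 2) →* SpecialLinearGroup (Fin 2) K) : Fin 3 → K :=
  ![trace (ρ (FreeGroup.of 0) : Matrix (Fin 2) (Fin 2) K),
    trace (ρ (FreeGroup.of 1) : Matrix (Fin 2) (Fin 2) K),
    trace (ρ (FreeGroup.of 0 * FreeGroup.of 1) : Matrix (Fin 2) (Fin 2) K)]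

theorem traceCoordinates_surjective {K : Type*} [Field K] [IsAlgClosed K] :
    Function.Surjective (traceCoordinates (K := K)) := by
  intro v
  obtain ⟨A, B, hA, hB, hAB⟩ :=
    Matrix.SpecialLinearGroup.exists_trace_eq_trace_eq_trace_mul_eq (v 0) (v 1) (v 2)
  refine ⟨FreeGroup.lift ![A, B], ?_⟩
  ext i
  fin_cases i <;> simp [traceCoordinates, hA, hB, hAB]

theorem trace_coordinates_algebraically_independent
    (P : MvPolynomial (Fin 3) ℂ)
    (hP : ∀ ρ : FreeGroup (Fin 2) →* Matrix.SpecialLinearGroup (Fin 2) ℂ,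
      MvPolynomial.eval
        ![Matrix.trace ((ρ (FreeGroup.of 0) : Matrix (Fin 2) (Fin 2) ℂ)),
          Matrix.trace ((ρ (FreeGroup.of 1) : Matrix (Fin 2) (Fin 2) ℂ)),
          Matrix.trace ((ρ (FreeGroup.of 0 * FreeGroup.of 1) : Matrix (Fin 2) (Fin 2) ℂ))]
        P = 0) :
    P = 0 := by
  refine MvPolynomial.funext fun v => ?_
  obtain ⟨ρ, rfl⟩ := traceCoordinates_surjective v
  exact hP ρ
end

section
/- Let G be a group and let ρ₁, ρ₂ : G → SL(2,ℂ) be group homomorphisms such that tr(ρ₁(g)) = tr(ρ₂(g)) for every g ∈ G. If ρ₁ is irreducible, i.e., there is no one-dimensional complex subspace L of ℂ² with ρ₁(g)(L) ⊆ L for all g ∈ G, then ρ₁ and ρ₂ are conjugate: there exists an invertible 2×2 complex matrix C such that ρ₂(g) = C ρ₁(g) C⁻¹ for all g ∈ G. -/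
/-!
Let `π₁, π₂ : ℂ[G] → M₂(ℂ)` be the algebra maps extending `ρ₁, ρ₂`. Irreducibility of `ρ₁` makes
`π₁` surjective (Burnside: Schur's lemma plus Jacobson density). Nondegeneracy of the trace form
`(x, y) ↦ tr (x y)` together with `tr ∘ π₁ = tr ∘ π₂` forces `ker π₁ = ker π₂`, so `π₂ = φ ∘ π₁`
for an algebra endomorphism `φ` of `M₂(ℂ)`, and every such `φ` is inner (Skolem–Noether).
-/

open Matrix Module

section LinearAlgebra

variable {K V : Type*} [Field K] [AddCommGroup V] [Module K V]

theorem Subalgebra.isSimpleModule_of_forall_invariant [Nontrivial V]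
    (S : Subalgebra K (Module.End K V))
    (h : ∀ W : Submodule K V, (∀ f ∈ S, ∀ v ∈ W, f v ∈ W) → W = ⊥ ∨ W = ⊤) :
    IsSimpleModule S V := by
  refine { eq_bot_or_eq_top := fun N => ?_ }
  have := h (N.restrictScalars K) fun f hf v hv => N.smul_mem ⟨f, hf⟩ hv
  rwa [Submodule.restrictScalars_eq_bot_iff, Submodule.restrictScalars_eq_top_iff] at this

theorem Subalgebra.eq_top_of_isSimpleModule [IsAlgClosed K] [FiniteDimensional K V]
    (S : Subalgebra K (Module.End K V)) [IsSimpleModule S V] : S = ⊤ := by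
  have hschur := IsSimpleModule.algebraMap_end_bijective_of_isAlgClosed (A := S) (V := V) K
  have : Module.Finite (Module.End S V) V := Module.Finite.of_restrictScalars_finite K _ V
  rw [eq_top_iff]
  intro f _
  let f' : Module.End (Module.End S V) V :=
    { f with
      map_smul' := fun e v => by
        obtain ⟨c, rfl⟩ := hschur.2 e
        simp }
  obtain ⟨s, hs⟩ := Module.Finite.toModuleEnd_moduleEnd_surjective (R := S) (M := V) f'
  have : (s : Module.End K V) = f := LinearMap.ext fun v => congr($hs v)
  exact this ▸ s.2

theorem Submodule.eq_bot_or_eq_top_of_finrank_ne_one [FiniteDimensional K V]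
    (hV : finrank K V = 2) (W : Submodule K V) (hW : finrank K W ≠ 1) : W = ⊥ ∨ W = ⊤ := by
  have : finrank K W ≤ 2 := hV ▸ Submodule.finrank_le W
  interval_cases h : finrank K W
  · exact .inl (Submodule.finrank_eq_zero.mp h)
  · exact absurd rfl hW
  · exact .inr (Submodule.eq_top_of_finrank_eq (h.trans hV.symm))

theorem LinearMap.surjective_of_ker_le {W : Type*} [AddCommGroup W] [Module K W]
    [FiniteDimensional K W] {f g : V →ₗ[K] W}
    (hf : Function.Surjective f) (hker : ker g ≤ ker f) : Function.Surjective g := by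
  have : FiniteDimensional K (V ⧸ ker g) := g.quotKerEquivRange.symm.finiteDimensional
  have hle : finrank K W ≤ finrank K (range g) :=
    calc finrank K W = finrank K (range ((ker g).liftQ f hker)) := by
          rw [Submodule.range_liftQ, range_eq_top.mpr hf, finrank_top]
      _ ≤ finrank K (V ⧸ ker g) := finrank_range_le _
      _ = finrank K (range g) := g.quotKerEquivRange.finrank_eq
  exact range_eq_top.mp (Submodule.eq_top_of_finrank_eq (le_antisymm (Submodule.finrank_le _) hle))

end LinearAlgebra

section Matrix

variable {K n A : Type*} [Field K] [Fintype n] [DecidableEq n] [Ring A] [Algebra K A]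

theorem Matrix.exists_mulVec_eq_of_ne_zero {v : n → K} (hv : v ≠ 0) (u : n → K) :
    ∃ x : Matrix n n K, x *ᵥ v = u := by
  obtain ⟨i, hi⟩ := Function.ne_iff.mp hv
  refine ⟨vecMulVec u (Pi.single i (v i)⁻¹), ?_⟩
  simp [vecMulVec_mulVec, single_dotProduct, inv_mul_cancel₀ hi]

theorem Submodule.eq_bot_or_eq_top_of_forall_mulVec_mem (W : Submodule K (n → K))
    (hW : ∀ x : Matrix n n K, ∀ v ∈ W, x *ᵥ v ∈ W) : W = ⊥ ∨ W = ⊤ := by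
  refine or_iff_not_imp_left.mpr fun hne => eq_top_iff.mpr fun u _ => ?_
  obtain ⟨v, hvW, hv⟩ := W.ne_bot_iff.mp hne
  obtain ⟨x, rfl⟩ := exists_mulVec_eq_of_ne_zero hv u
  exact hW x v hvW

theorem AlgHom.surjective_of_forall_invariant [IsAlgClosed K] [Nonempty n]
    (π : A →ₐ[K] Matrix n n K)
    (h : ∀ W : Submodule K (n → K), (∀ a, ∀ v ∈ W, π a *ᵥ v ∈ W) → W = ⊥ ∨ W = ⊤) :
    Function.Surjective π := by
  let e : Matrix n n K ≃ₐ[K] Module.End K (n → K) := toLinAlgEquiv'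
  let S := (e.toAlgHom.comp π).range
  have : IsSimpleModule S (n → K) := S.isSimpleModule_of_forall_invariant fun W hW =>
    h W fun a v hv => hW _ ⟨a, rfl⟩ v hv
  intro x
  obtain ⟨a, ha⟩ := S.eq_top_of_isSimpleModule ▸ Algebra.mem_top (x := e x)
  exact ⟨a, e.injective ha⟩

theorem AlgHom.ker_le_ker_of_trace_eq (π₁ π₂ : A →ₐ[K] Matrix n n K)
    (hπ₁ : Function.Surjective π₁) (htr : ∀ a, trace (π₁ a) = trace (π₂ a)) :
    RingHom.ker π₂ ≤ RingHom.ker π₁ := by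
  intro a ha
  rw [RingHom.mem_ker] at ha ⊢
  refine ext_iff_trace_mul_left.mpr fun x => ?_
  obtain ⟨b, rfl⟩ := hπ₁ x
  rw [← map_mul, htr, map_mul, ha, mul_zero, mul_zero]

theorem AlgHom.exists_comp_eq_of_trace_eq (π₁ π₂ : A →ₐ[K] Matrix n n K)
    (hπ₁ : Function.Surjective π₁) (htr : ∀ a, trace (π₁ a) = trace (π₂ a)) :
    ∃ φ : Matrix n n K →ₐ[K] Matrix n n K, ∀ a, φ (π₁ a) = π₂ a := by
  have hπ₂ : Function.Surjective π₂ :=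
    LinearMap.surjective_of_ker_le (f := π₁.toLinearMap) (g := π₂.toLinearMap) hπ₁
      (π₁.ker_le_ker_of_trace_eq π₂ hπ₁ htr)
  have hker := π₂.ker_le_ker_of_trace_eq π₁ hπ₂ fun a => (htr a).symm
  refine ⟨(Ideal.Quotient.liftₐ _ π₂ hker).comp
    (Ideal.quotientKerAlgEquivOfSurjective hπ₁).symm, fun a => ?_⟩
  simp only [AlgHom.comp_apply, AlgEquiv.coe_toAlgHom,
    Ideal.quotientKerAlgEquivOfSurjective_symm_apply]
  exact Ideal.Quotient.lift_mk _ _ _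

theorem AlgHom.map_single_ne_zero [Nontrivial A] (φ : Matrix n n K →ₐ[K] A) (i : n) :
    φ (single i i 1) ≠ 0 := by
  intro h
  have : (1 : Matrix n n K) = ∑ k, single k i 1 * single i i 1 * single i k 1 := by
    simp [single_mul_single_same, sum_single_one]
  apply one_ne_zero (α := A)
  rw [← map_one φ, this, map_sum]
  simp only [map_mul, h, mul_zero, zero_mul, Finset.sum_const_zero]

theorem AlgHom.exists_isUnit_eq_conj [Nonempty n] (φ : Matrix n n K →ₐ[K] Matrix n n K) :
    ∃ C : Matrix n n K, IsUnit C ∧ ∀ x, φ x = C * x * C⁻¹ := by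
  obtain ⟨i⟩ := ‹Nonempty n›
  obtain ⟨w, hw⟩ : ∃ w, φ (single i i 1) *ᵥ w ≠ 0 := by
    by_contra! h
    exact φ.map_single_ne_zero i (ext_of_mulVec_single fun j => by rw [h, zero_mulVec])
  -- `v ↦ v eᵢᵀ` is `Matrix`-equivariant, so `ℓ` intertwines the actions `x` and `φ x`.
  let ℓ : (n → K) →ₗ[K] (n → K) :=
    { toFun := fun v => φ (vecMulVec v (Pi.single i 1)) *ᵥ w
      map_add' := fun u v => by simp [add_vecMulVec, add_mulVec]
      map_smul' := fun c v => by simp [smul_vecMulVec, smul_mulVec] }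
  have hℓ : ∀ x v, ℓ (x *ᵥ v) = φ x *ᵥ ℓ v := fun x v => by
    simp [ℓ, ← mul_vecMulVec, mulVec_mulVec]
  have hℓne : ℓ ≠ 0 := fun h => by
    have := LinearMap.congr_fun h (Pi.single i 1)
    simp only [ℓ, LinearMap.coe_mk, AddHom.coe_mk, ← single_eq_single_vecMulVec_single,
      LinearMap.zero_apply] at this
    exact hw this
  have hinj : Function.Injective ℓ := by
    rw [← LinearMap.ker_eq_bot]
    refine ((LinearMap.ker ℓ).eq_bot_or_eq_top_of_forall_mulVec_mem fun x v hv => ?_).resolve_right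
      fun h => hℓne (LinearMap.ker_eq_top.mp h)
    rw [LinearMap.mem_ker] at hv ⊢
    rw [hℓ, hv, mulVec_zero]
  set C := LinearMap.toMatrix' ℓ
  have hC : ∀ v, C *ᵥ v = ℓ v := LinearMap.toMatrix'_mulVec ℓ
  have hCunit : IsUnit C := mulVec_injective_iff_isUnit.mp (by simpa [funext hC] using hinj)
  refine ⟨C, hCunit, fun x => ?_⟩
  have : φ x * C = C * x := ext_of_mulVec_single fun j => by
    rw [← mulVec_mulVec, ← mulVec_mulVec, hC, hC, hℓ]
  rw [← this, mul_nonsing_inv_cancel_right _ _ ((isUnit_iff_isUnit_det C).mp hCunit)]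

theorem MonoidAlgebra.trace_lift_eq {G : Type*} [Monoid G] (ρ₁ ρ₂ : G →* Matrix n n K)
    (htr : ∀ g, trace (ρ₁ g) = trace (ρ₂ g)) (a : MonoidAlgebra K G) :
    trace (lift K (Matrix n n K) G ρ₁ a) = trace (lift K (Matrix n n K) G ρ₂ a) := by
  induction a using MonoidAlgebra.induction_on with
  | of g => simp [htr]
  | add a b ha hb => simp [ha, hb]
  | smul c a ha => simp [ha]

end Matrix

theorem sl2_irreducible_equal_trace_conjugate
    {G : Type*} [Group G]
    (ρ₁ ρ₂ : G →* Matrix.SpecialLinearGroup (Fin 2) ℂ)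
    (htr : ∀ g : G,
      Matrix.trace ((ρ₁ g : Matrix (Fin 2) (Fin 2) ℂ)) =
        Matrix.trace ((ρ₂ g : Matrix (Fin 2) (Fin 2) ℂ)))
    (hirr : ¬ ∃ L : Submodule ℂ (Fin 2 → ℂ),
      Module.finrank ℂ L = 1 ∧
        ∀ g : G, ∀ v ∈ L, Matrix.mulVec ((ρ₁ g : Matrix (Fin 2) (Fin 2) ℂ)) v ∈ L) :
    ∃ C : Matrix (Fin 2) (Fin 2) ℂ, IsUnit C ∧
      ∀ g : G, (ρ₂ g : Matrix (Fin 2) (Fin 2) ℂ) =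
        C * (ρ₁ g : Matrix (Fin 2) (Fin 2) ℂ) * C⁻¹ := by
  let π₁ := MonoidAlgebra.lift ℂ _ G (SpecialLinearGroup.coeMonoidHom.comp ρ₁)
  let π₂ := MonoidAlgebra.lift ℂ _ G (SpecialLinearGroup.coeMonoidHom.comp ρ₂)
  have hπ₁ : Function.Surjective π₁ := π₁.surjective_of_forall_invariant fun W hW =>
    W.eq_bot_or_eq_top_of_finrank_ne_one (by simp) fun hW₁ =>
      hirr ⟨W, hW₁, fun g => by simpa [π₁] using hW (MonoidAlgebra.of ℂ G g)⟩
  obtain ⟨φ, hφ⟩ := π₁.exists_comp_eq_of_trace_eq π₂ hπ₁ (MonoidAlgebra.trace_lift_eq _ _ htr)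
  obtain ⟨C, hC, hconj⟩ := φ.exists_isUnit_eq_conj
  refine ⟨C, hC, fun g => ?_⟩
  simpa [π₁, π₂] using (hφ (MonoidAlgebra.of ℂ G g)).symm.trans (hconj _)
end
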